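/- arXiv:1403.0346 — 3 statements merged into one kernel-verified Lean document; each statement's English description precedes it below -/
import Mathlib

section
/- Let n ≥ 2 and let 𝔞, 𝔟, 𝔠 be elements of GL(n, ℂ) such that [𝔞, 𝔟] = 𝔠, [𝔞, 𝔠] = [𝔟, 𝔠] = id, and 𝔠^p = id for some prime p with 𝔠 ≠ id. Then p ≤ n. -/
/-!
Since `c ^ p = 1` and `c ≠ 1`, spectral mapping applied to the cyclotomic polynomial `Φ_p`
(which kills `c` on the range of `c - 1`) gives an eigenvalue `ζ` of `c` that is a primitive
`p`-th root of unity. As `a` and `b` commute with `c`, they preserve the `ζ`-eigenspace `W`, and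
on `W` the relation `a b = c b a` reads `a b = ζ • b a`. Taking determinants on `W` gives
`ζ ^ dim W = 1`, so `p ∣ dim W`, and `W ≠ 0` yields `p ≤ dim W ≤ n`.
-/

open Polynomial Module Module.End
open scoped commutatorElement

theorem spectrum.exists_isPrimitiveRoot_of_pow_prime_eq_one {𝕜 A : Type*} [Field 𝕜]
    [IsAlgClosed 𝕜] [Ring A] [Algebra 𝕜 A] {p : ℕ} [Fact p.Prime] [NeZero (p : 𝕜)] {a : A}
    (hap : a ^ p = 1) (ha : a ≠ 1) : ∃ z ∈ spectrum 𝕜 a, IsPrimitiveRoot z p := by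
  have hgeom : aeval a (cyclotomic p 𝕜) * (a - 1) = 0 := by
    simp only [cyclotomic_prime, map_sum, map_pow, aeval_X, geom_sum_mul, hap, sub_self]
  have hzero : (0 : 𝕜) ∈ spectrum 𝕜 (aeval a (cyclotomic p 𝕜)) :=
    (spectrum.zero_mem_iff 𝕜).mpr fun hunit =>
      ha <| sub_eq_zero.mp <| hunit.mul_right_eq_zero.mp hgeom
  rw [spectrum.map_polynomial_aeval_of_degree_pos a _
    (degree_cyclotomic_pos p 𝕜 (Fact.out : p.Prime).pos)] at hzero
  obtain ⟨z, hz, hroot⟩ := hzero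
  exact ⟨z, hz, isRoot_cyclotomic_iff.mp hroot⟩

theorem Module.End.pow_finrank_eq_one_of_mul_eq_smul_mul {R M : Type*} [CommRing R]
    [AddCommGroup M] [Module R M] [Module.Free R M] [Module.Finite R M] {f g : End R M} {z : R}
    (h : f * g = z • (g * f)) (hfg : IsUnit (f * g)) : z ^ finrank R M = 1 := by
  have hdet : z ^ finrank R M * LinearMap.det (f * g) = 1 * LinearMap.det (f * g) := by
    conv_rhs => rw [h]
    rw [LinearMap.det_smul, map_mul, map_mul, mul_comm (LinearMap.det g), one_mul]
  exact (hfg.map LinearMap.det).mul_right_cancel hdet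

variable {K V : Type*} [Field K] [AddCommGroup V] [Module K V] [FiniteDimensional K V]

theorem Module.End.isUnit_restrict {f : End K V} (hf : IsUnit f) {p : Submodule K V}
    (hp : ∀ x ∈ p, f x ∈ p) : IsUnit (f.restrict hp) := by
  rw [LinearMap.isUnit_iff_ker_eq_bot, LinearMap.ker_eq_bot, LinearMap.injective_restrict_iff,
    LinearMap.ker_eq_bot.mpr ((Module.End.isUnit_iff f).mp hf).injective]
  exact disjoint_bot_right

theorem Module.End.pow_finrank_eigenspace_eq_one {a b c : End K V} (ha : IsUnit a)
    (hb : IsUnit b) (habc : a * b = c * (b * a)) (hac : Commute a c) (hbc : Commute b c)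
    (z : K) : z ^ finrank K (c.eigenspace z) = 1 := by
  have hmaps {g : End K V} (hg : Commute g c) : ∀ x ∈ c.eigenspace z, g x ∈ c.eigenspace z :=
    fun x hx => mapsTo_genEigenspace_of_comm hg.symm z 1 hx
  refine pow_finrank_eq_one_of_mul_eq_smul_mul (f := a.restrict (hmaps hac))
    (g := b.restrict (hmaps hbc)) ?_ ((isUnit_restrict ha _).mul (isUnit_restrict hb _))
  ext ⟨x, hx⟩
  have hbax : b (a x) ∈ c.eigenspace z := hmaps hbc _ (hmaps hac x hx)
  change a (b x) = z • b (a x)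
  rw [← mem_eigenspace_iff.mp hbax, ← Module.End.mul_apply, habc]
  rfl

theorem prime_le_finrank_of_commutatorElement_eq [IsAlgClosed K] [CharZero K]
    {a b c : LinearMap.GeneralLinearGroup K V} (habc : ⁅a, b⁆ = c) (hac : Commute a c)
    (hbc : Commute b c)
    {p : ℕ} (hp : p.Prime) (hcp : c ^ p = 1) (hc : c ≠ 1) : p ≤ finrank K V := by
  have : Fact p.Prime := ⟨hp⟩
  have hab : a * b = c * (b * a) := by
    rw [← habc, commutatorElement_def]
    group
  obtain ⟨z, hz, hzp⟩ := spectrum.exists_isPrimitiveRoot_of_pow_prime_eq_one (𝕜 := K)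
    (a := (c : End K V)) (by rw [← Units.val_pow_eq_pow_val, hcp, Units.val_one])
    (Units.val_eq_one.not.mpr hc)
  have hdpos : 0 < finrank K (eigenspace (c : End K V) z) :=
    Submodule.one_le_finrank_iff.mpr (hasEigenvalue_iff_mem_spectrum.mpr hz)
  calc p ≤ finrank K (eigenspace (c : End K V) z) :=
        Nat.le_of_dvd hdpos <| hzp.dvd_of_pow_eq_one _ <| pow_finrank_eigenspace_eq_one a.isUnit
          b.isUnit (by exact_mod_cast hab) (Commute.units_val_iff.mpr hac)
          (Commute.units_val_iff.mpr hbc) z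
    _ ≤ finrank K V := Submodule.finrank_le _

theorem birkhoff_lemma_general (n : ℕ) (a b c : GL (Fin n) ℂ)
    (h1 : a * b * a⁻¹ * b⁻¹ = c)
    (h2 : a * c * a⁻¹ * c⁻¹ = 1)
    (h3 : b * c * b⁻¹ * c⁻¹ = 1)
    (p : ℕ) (hp : p.Prime) (hcp : c ^ p = 1) (hc : c ≠ 1) :
    p ≤ n := by
  let φ := Matrix.GeneralLinearGroup.toLin (n := Fin n) (R := ℂ)
  have hac : Commute a c := commutatorElement_eq_one_iff_commute.mp h2
  have hbc : Commute b c := commutatorElement_eq_one_iff_commute.mp h3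
  have hle := prime_le_finrank_of_commutatorElement_eq (a := φ a) (b := φ b) (c := φ c)
    (by rw [← map_commutatorElement]; exact congrArg φ h1) (hac.map φ) (hbc.map φ) hp
    (by rw [← map_pow, hcp, map_one]) (φ.map_ne_one_iff.mpr hc)
  rwa [finrank_fin_fun] at hle

/-- Birkhoff's lemma: if `a, b, c ∈ GL(n, ℂ)` satisfy `[a,b] = c`,
`c` commutes with `a` and `b`, and `c^p = 1` for a prime `p` with `c ≠ 1`,
then `p ≤ n`. -/
theorem birkhoff_lemma (n : ℕ) (hn : 2 ≤ n) (a b c : GL (Fin n) ℂ)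
    (h1 : a * b * a⁻¹ * b⁻¹ = c)
    (h2 : a * c * a⁻¹ * c⁻¹ = 1)
    (h3 : b * c * b⁻¹ * c⁻¹ = 1)
    (p : ℕ) (hp : p.Prime) (hcp : c ^ p = 1) (hc : c ≠ 1) :
    p ≤ n :=
  birkhoff_lemma_general n a b c h1 h2 h3 p hp hcp hc
end

section
/- In the group of Möbius transformations PGL(2,ℂ) acting on ℙ¹, the transformation t ↦ 1/t and a generic transformation t ↦ (αt+β)/(γt+δ) generate a group isomorphic to the free product ℤ * ℤ/2ℤ; more precisely, the set of matrices [[α,β],[γ,δ]] ∈ PGL(2,ℂ) for which the group generated by [[α,β],[γ,δ]] and [[0,1],[1,0]] fails to be isomorphic to ℤ * ℤ/2ℤ is a countable union of proper Zariski-closed subsets of PGL(2,ℂ). -/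
/-- `PGL(2, ℂ)` as the quotient of `GL(2, ℂ)` by its center. -/
noncomputable abbrev PGL2C := GL (Fin 2) ℂ ⧸ Subgroup.center (GL (Fin 2) ℂ)

/-- A subset of `GL(2, ℂ)` is Zariski closed if it is the common zero set of a
family of polynomials in the matrix entries. -/
def IsZariskiClosedGL (C : Set (GL (Fin 2) ℂ)) : Prop :=
  ∃ P : Set (MvPolynomial (Fin 2 × Fin 2) ℂ),
    C = {g : GL (Fin 2) ℂ | ∀ q ∈ P,
      MvPolynomial.eval (fun ij => (g : Matrix (Fin 2) (Fin 2) ℂ) ij.1 ij.2) q = 0}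

/-- A subset of `PGL(2, ℂ)` is Zariski closed if its preimage in `GL(2, ℂ)` is. -/
def IsZariskiClosedPGL (C : Set PGL2C) : Prop :=
  IsZariskiClosedGL ((QuotientGroup.mk' (Subgroup.center (GL (Fin 2) ℂ))) ⁻¹' C)

/-!
A word `w` of `ℤ ∗ ℤ/2ℤ` evaluated at `(g, s)` is, up to a scalar, a matrix of polynomials in the
entries of a lift of `g`: inverses can be represented by adjugates. Hence `{g | w(g, s) = 1}` is
cut out by the three polynomials saying that this matrix is scalar. It is a proper subset when
`w ≠ 1`, because `t ↦ t + 2` and `t ↦ 1/t` generate a copy of `ℤ ∗ ℤ/2ℤ`: they play ping-pong on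
`|t| < 1` and `|t| > 1` in `ℙ¹`. As `ℤ ∗ ℤ/2ℤ` is countable, off the union of these sets the
evaluation map is injective, and its image is the group generated by `g` and `s`.
-/

open Matrix Matrix.GeneralLinearGroup MvPolynomial Monoid Function Cardinal
open scoped LinearAlgebra.Projectivization MatrixGroups Pointwise

namespace Monoid.Coprod

instance countable {M N : Type*} [Monoid M] [Monoid N] [Countable M] [Countable N] :
    Countable (Coprod M N) :=
  haveI : Countable (FreeMonoid (M ⊕ N)) := inferInstanceAs (Countable (List (M ⊕ N)))
  mk_surjective.countable

universe u

variable {G H : Type u} [Group G] [Group H]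

abbrev boolFamily (G H : Type u) : Bool → Type u := fun b => cond b G H

instance (b : Bool) : Group (boolFamily G H b) := by cases b <;> dsimp <;> infer_instance

def toCoprodI : Coprod G H →* CoprodI (boolFamily G H) :=
  lift (CoprodI.of (M := boolFamily G H) (i := true))
    (CoprodI.of (M := boolFamily G H) (i := false))

def ofCoprodI : CoprodI (boolFamily G H) →* Coprod G H :=
  CoprodI.lift fun | true => inl | false => inr

theorem ofCoprodI_comp_toCoprodI : (ofCoprodI (G := G) (H := H)).comp toCoprodI = .id _ :=
  hom_ext (by ext; simp [ofCoprodI, toCoprodI]) (by ext; simp [ofCoprodI, toCoprodI])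

theorem lift_injective_of_ping_pong {K α : Type*} [Group K] [MulAction K α] (f : G →* K)
    (g : H →* K) (hcard : 3 ≤ #G ∨ 3 ≤ #H) (X Y : Set α) (hX : X.Nonempty) (hY : Y.Nonempty)
    (hXY : Disjoint X Y) (hf : ∀ a : G, a ≠ 1 → f a • Y ⊆ X)
    (hg : ∀ b : H, b ≠ 1 → g b • X ⊆ Y) :
    Injective (lift f g) := by
  let F : ∀ b, boolFamily G H b →* K := fun | true => f | false => g
  have hlift : lift f g = (CoprodI.lift F).comp toCoprodI :=
    hom_ext (by ext; simp [F, toCoprodI]) (by ext; simp [F, toCoprodI])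
  have hpp : Pairwise fun i j => ∀ h, h ≠ 1 → F i h • cond j X Y ⊆ cond i X Y := by
    rintro (_ | _) (_ | _) hij <;> first | exact absurd rfl hij | exact hf | exact hg
  rw [hlift, MonoidHom.coe_comp]
  refine (CoprodI.lift_injective_of_ping_pong F ?_ (fun b => cond b X Y) ?_ ?_ hpp).comp
    (LeftInverse.injective (g := ofCoprodI) (DFunLike.congr_fun ofCoprodI_comp_toCoprodI))
  · exact hcard.elim (fun h => .inr ⟨true, h⟩) (fun h => .inr ⟨false, h⟩)
  · rintro (_ | _) <;> assumption
  · rintro (_ | _) (_ | _) hij <;> first | exact absurd rfl hij | exact hXY | exact hXY.symm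

end Monoid.Coprod

section FreeProd

variable {G : Type*} [Group G]

def zmodPowersHom (n : ℕ) (x : G) (hx : x ^ n = 1) : Multiplicative (ZMod n) →* G :=
  AddMonoidHom.toMultiplicativeLeft <| ZMod.lift n
    ⟨AddMonoidHom.toMultiplicativeLeft.symm (zpowersHom G x),
      by simpa [← ofMul_zpow] using congrArg Additive.ofMul hx⟩

theorem zmodPowersHom_ofAdd_intCast (n : ℕ) (x : G) (hx : x ^ n = 1) (k : ℤ) :
    zmodPowersHom n x hx (.ofAdd k) = x ^ k := by
  simp [zmodPowersHom]

theorem range_zmodPowersHom (n : ℕ) (x : G) (hx : x ^ n = 1) :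
    (zmodPowersHom n x hx).range = Subgroup.zpowers x := by
  ext y
  simp only [MonoidHom.mem_range, Subgroup.mem_zpowers_iff]
  constructor
  · rintro ⟨k, rfl⟩
    obtain ⟨k, rfl⟩ := ZMod.intCast_surjective k.toAdd
    exact ⟨k, (zmodPowersHom_ofAdd_intCast n x hx k).symm⟩
  · rintro ⟨k, rfl⟩
    exact ⟨_, zmodPowersHom_ofAdd_intCast n x hx k⟩

def freeProdHom (g s : G) (hs : s ^ 2 = 1) :
    Coprod (Multiplicative ℤ) (Multiplicative (ZMod 2)) →* G :=
  Coprod.lift (zpowersHom G g) (zmodPowersHom 2 s hs)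

theorem range_freeProdHom (g s : G) (hs : s ^ 2 = 1) :
    (freeProdHom g s hs).range = Subgroup.closure {g, s} := by
  rw [freeProdHom, Coprod.range_lift, range_zmodPowersHom, Set.insert_eq, Subgroup.closure_union,
    ← Subgroup.zpowers_eq_closure, ← Subgroup.zpowers_eq_closure]
  rfl

end FreeProd

theorem norm_lt_norm_add_mul {𝕜 : Type*} [NormedDivisionRing 𝕜] {a b c : 𝕜} (hab : ‖a‖ < ‖b‖)
    (hc : 2 ≤ ‖c‖) : ‖b‖ < ‖a + c * b‖ := by
  have hcb : 2 * ‖b‖ ≤ ‖c * b‖ := by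
    rw [norm_mul]
    nlinarith [norm_nonneg b]
  have := norm_sub_le (a + c * b) a
  rw [add_sub_cancel_left] at this
  linarith

theorem Projectivization.norm_rep_mk_lt_iff {K ι : Type*} [NormedDivisionRing K] {v : ι → K}
    (hv : v ≠ 0) (i j : ι) :
    ‖(mk K v hv).rep i‖ < ‖(mk K v hv).rep j‖ ↔ ‖v i‖ < ‖v j‖ := by
  obtain ⟨a, ha⟩ := exists_smul_eq_mk_rep K v hv
  rw [← ha]
  simp [Units.smul_def, norm_mul, a.ne_zero]

namespace Matrix.GeneralLinearGroup

theorem mem_center_iff_fin_two {R : Type*} [CommRing R] {h : GL (Fin 2) R} :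
    h ∈ Subgroup.center (GL (Fin 2) R) ↔ (h : Matrix (Fin 2) (Fin 2) R) 0 1 = 0 ∧
      (h : Matrix (Fin 2) (Fin 2) R) 1 0 = 0 ∧
      (h : Matrix (Fin 2) (Fin 2) R) 0 0 = (h : Matrix (Fin 2) (Fin 2) R) 1 1 := by
  rw [mem_center_iff_val_mem_range_scalar]
  constructor
  · rintro ⟨a, ha⟩
    simp [← ha]
  · rintro ⟨h01, h10, h00⟩
    refine ⟨(h : Matrix (Fin 2) (Fin 2) R) 0 0, ?_⟩
    ext i j
    fin_cases i <;> fin_cases j <;> simp [h01, h10, h00]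

variable {n R : Type*} [Fintype n] [DecidableEq n] [CommRing R]

theorem coe_inv_mul_scalar_det (h : GL n R) :
    ((h⁻¹ * scalar n (det h) : GL n R) : Matrix n n R) = (h : Matrix n n R).adjugate := by
  rw [Units.val_mul, coe_scalar, val_det_apply, Matrix.scalar_apply, ← smul_one_eq_diagonal,
    ← mul_adjugate, ← Matrix.mul_assoc, ← Units.val_mul, inv_mul_cancel, Units.val_one,
    Matrix.one_mul]

def evalEntries (g : GL n R) : MvPolynomial (n × n) R →+* R :=
  MvPolynomial.eval fun ij => (g : Matrix n n R) ij.1 ij.2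

variable (n R) in
def polynomialSelfMaps :
    Subgroup (GL n R ⧸ Subgroup.center (GL n R) → GL n R ⧸ Subgroup.center (GL n R)) where
  carrier := {f | ∃ P : Matrix n n (MvPolynomial (n × n) R), ∀ g : GL n R,
    ∃ h : GL n R, (h : Matrix n n R) = (evalEntries g).mapMatrix P ∧ f g = h}
  one_mem' := ⟨1, fun _ => ⟨1, by simp, rfl⟩⟩
  mul_mem' := by
    rintro f₁ f₂ ⟨P₁, hP₁⟩ ⟨P₂, hP₂⟩
    refine ⟨P₁ * P₂, fun g => ?_⟩
    obtain ⟨h₁, hh₁, hf₁⟩ := hP₁ g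
    obtain ⟨h₂, hh₂, hf₂⟩ := hP₂ g
    exact ⟨h₁ * h₂, by rw [Units.val_mul, hh₁, hh₂, map_mul], by simp [hf₁, hf₂]⟩
  inv_mem' := by
    rintro f ⟨P, hP⟩
    refine ⟨P.adjugate, fun g => ?_⟩
    obtain ⟨h, hh, hf⟩ := hP g
    refine ⟨h⁻¹ * scalar n (det h), by rw [coe_inv_mul_scalar_det, hh, RingHom.map_adjugate], ?_⟩
    have : ((scalar n (det h) : GL n R) : GL n R ⧸ Subgroup.center (GL n R)) = 1 :=
      (QuotientGroup.eq_one_iff _).mpr (center_eq_range_scalar (n := n) (R := R) ▸ ⟨_, rfl⟩)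
    simp [hf, this]

theorem id_mem_polynomialSelfMaps : id ∈ polynomialSelfMaps n R :=
  ⟨Matrix.of fun i j => X (i, j), fun g => ⟨g, by ext; simp [evalEntries], rfl⟩⟩

theorem const_mem_polynomialSelfMaps (p : GL n R ⧸ Subgroup.center (GL n R)) :
    Function.const _ p ∈ polynomialSelfMaps n R := by
  obtain ⟨h, rfl⟩ := QuotientGroup.mk_surjective p
  exact ⟨C.mapMatrix (h : Matrix n n R), fun g => ⟨h, by ext; simp [evalEntries], rfl⟩⟩

theorem freeProdHom_apply_mem_polynomialSelfMaps (σ : GL n R ⧸ Subgroup.center (GL n R))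
    (hσ : σ ^ 2 = 1) (w : Coprod (Multiplicative ℤ) (Multiplicative (ZMod 2))) :
    (fun g => freeProdHom g σ hσ w) ∈ polynomialSelfMaps n R := by
  induction w using Coprod.induction_on with
  | inl m => exact zpow_mem id_mem_polynomialSelfMaps m.toAdd
  | inr k => exact const_mem_polynomialSelfMaps _
  | mul x y hx hy =>
    simp only [map_mul]
    exact mul_mem hx hy

end Matrix.GeneralLinearGroup

namespace PGL2C

theorem isZariskiClosedPGL_setOf_eq_one {f : PGL2C → PGL2C}
    (hf : f ∈ polynomialSelfMaps (Fin 2) ℂ) : IsZariskiClosedPGL {p | f p = 1} := by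
  obtain ⟨P, hP⟩ := hf
  refine ⟨{P 0 1, P 1 0, P 0 0 - P 1 1}, Set.ext fun g => ?_⟩
  obtain ⟨h, hh, hfg⟩ := hP g
  have hentry (i j : Fin 2) :
      MvPolynomial.eval (fun ij => (g : Matrix (Fin 2) (Fin 2) ℂ) ij.1 ij.2) (P i j) =
        (h : Matrix (Fin 2) (Fin 2) ℂ) i j := by
    rw [hh]; rfl
  simp [hfg, QuotientGroup.eq_one_iff, mem_center_iff_fin_two, hentry, sub_eq_zero]

noncomputable instance : MulAction PGL2C (ℙ ℂ (Fin 2 → ℂ)) :=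
  inferInstanceAs (MulAction PGL(Fin 2, ℂ) _)

theorem mk_smul_mk (g : GL (Fin 2) ℂ) {v : Fin 2 → ℂ} (hv : v ≠ 0) :
    (g : PGL2C) • Projectivization.mk ℂ v hv =
      Projectivization.mk ℂ (g • v) ((smul_ne_zero_iff_ne g).2 hv) := rfl

theorem upperRight_zpow_smul_subset {k : ℤ} (hk : k ≠ 0) :
    ((upperRightHom (2 : ℂ) : PGL2C) ^ k) • {p : ℙ ℂ (Fin 2 → ℂ) | ‖p.rep 0‖ < ‖p.rep 1‖} ⊆
      {p | ‖p.rep 1‖ < ‖p.rep 0‖} := by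
  have h2k : 2 ≤ ‖(k • 2 : ℂ)‖ := by
    have : (1 : ℝ) ≤ |(k : ℝ)| := by exact_mod_cast Int.one_le_abs hk
    rw [zsmul_eq_mul, norm_mul, Complex.norm_intCast, Complex.norm_two]
    linarith
  rw [← QuotientGroup.mk_zpow, ← AddChar.map_zsmul_eq_zpow, Set.smul_set_subset_iff]
  rintro p hp
  induction p using Projectivization.ind with | h v hv => ?_
  simp only [Set.mem_ofPred_eq, Projectivization.norm_rep_mk_lt_iff] at hp ⊢
  rw [mk_smul_mk, Projectivization.norm_rep_mk_lt_iff]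
  simpa [Units.smul_def, Matrix.mulVec, dotProduct, Fin.sum_univ_two] using
    norm_lt_norm_add_mul hp h2k

theorem swap_smul_subset (s : GL (Fin 2) ℂ)
    (hs : (s : Matrix (Fin 2) (Fin 2) ℂ) = !![0, 1; 1, 0]) :
    (s : PGL2C) • {p : ℙ ℂ (Fin 2 → ℂ) | ‖p.rep 1‖ < ‖p.rep 0‖} ⊆ {p | ‖p.rep 0‖ < ‖p.rep 1‖} := by
  rw [Set.smul_set_subset_iff]
  rintro p hp
  induction p using Projectivization.ind with | h v hv => ?_
  simp only [Set.mem_ofPred_eq, Projectivization.norm_rep_mk_lt_iff] at hp ⊢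
  rw [mk_smul_mk, Projectivization.norm_rep_mk_lt_iff]
  simpa [Units.smul_def, hs, Matrix.mulVec, dotProduct, Fin.sum_univ_two] using hp

theorem swap_sq (s : GL (Fin 2) ℂ) (hs : (s : Matrix (Fin 2) (Fin 2) ℂ) = !![0, 1; 1, 0]) :
    (s : PGL2C) ^ 2 = 1 := by
  rw [← QuotientGroup.mk_pow, QuotientGroup.eq_one_iff, mem_center_iff_fin_two]
  simp [sq, hs]

theorem injective_freeProdHom_upperRight_swap (s : GL (Fin 2) ℂ)
    (hs : (s : Matrix (Fin 2) (Fin 2) ℂ) = !![0, 1; 1, 0]) :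
    Injective (freeProdHom (upperRightHom (2 : ℂ) : PGL2C) s (swap_sq s hs)) := by
  refine Coprod.lift_injective_of_ping_pong _ _ (.inl ?_) _ _
    ⟨Projectivization.mk ℂ ![1, 0] (by simp), ?_⟩ ⟨Projectivization.mk ℂ ![0, 1] (by simp), ?_⟩
    ?_ (fun a ha => upperRight_zpow_smul_subset ?_) (fun b hb => ?_)
  · simp
  · simp [Projectivization.norm_rep_mk_lt_iff]
  · simp [Projectivization.norm_rep_mk_lt_iff]
  · exact Set.disjoint_left.mpr fun _ h₁ h₂ => lt_asymm h₁ h₂.out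
  · simpa using ha
  · obtain rfl : b = .ofAdd 1 := by revert b; decide
    have hσ := zmodPowersHom_ofAdd_intCast 2 (s : PGL2C) (swap_sq s hs) 1
    rw [Int.cast_one, zpow_one] at hσ
    simpa [freeProdHom, hσ] using swap_smul_subset s hs

end PGL2C

/-- The set of `g ∈ PGL(2, ℂ)` for which the group generated by `g` and the
involution `t ↦ 1/t` (the class of `[[0,1],[1,0]]`) fails to be isomorphic to the
free product `ℤ ∗ ℤ/2ℤ` is contained in a countable union of proper Zariski-closed
subsets of `PGL(2, ℂ)`. -/
theorem stmt7 (s : GL (Fin 2) ℂ)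
    (hs : (s : Matrix (Fin 2) (Fin 2) ℂ) = !![0, 1; 1, 0]) :
    ∃ C : ℕ → Set PGL2C,
      (∀ i, IsZariskiClosedPGL (C i) ∧ C i ≠ Set.univ) ∧
      ∀ g : PGL2C, g ∉ ⋃ i, C i →
        Nonempty
          ((Subgroup.closure {g, QuotientGroup.mk' (Subgroup.center (GL (Fin 2) ℂ)) s} :
              Subgroup PGL2C) ≃*
            Monoid.Coprod (Multiplicative ℤ) (Multiplicative (ZMod 2))) := by
  have hσ := PGL2C.swap_sq s hs
  have : Nonempty {w : Coprod (Multiplicative ℤ) (Multiplicative (ZMod 2)) // w ≠ 1} :=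
    ⟨⟨Coprod.inl (.ofAdd 1), (map_ne_one_iff _ Coprod.inl_injective).mpr (by decide)⟩⟩
  obtain ⟨w, hw⟩ :=
    exists_surjective_nat {w : Coprod (Multiplicative ℤ) (Multiplicative (ZMod 2)) // w ≠ 1}
  refine ⟨fun i => {g | freeProdHom g s hσ (w i) = 1}, fun i => ⟨?_, ?_⟩, fun g hg => ?_⟩
  · exact PGL2C.isZariskiClosedPGL_setOf_eq_one (freeProdHom_apply_mem_polynomialSelfMaps _ hσ _)
  · exact fun h => (w i).2 <| (injective_iff_map_eq_one _).mp
      (PGL2C.injective_freeProdHom_upperRight_swap s hs) _ (Set.eq_univ_iff_forall.mp h _)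
  · have hinj : Injective (freeProdHom g s hσ) := by
      refine (injective_iff_map_eq_one _).mpr fun x hx => by_contra fun hx1 => hg ?_
      obtain ⟨i, hi⟩ := hw ⟨x, hx1⟩
      exact Set.mem_iUnion.mpr ⟨i, by simp [hi, hx]⟩
    exact ⟨((MonoidHom.ofInjective hinj).trans
      (MulEquiv.subgroupCongr (range_freeProdHom g _ hσ))).symm⟩
end

section
/- Let G be a group and suppose there exist elements g_p ∈ G for infinitely many primes p, together with elements φ, h_p ∈ G, such that h_p = [φ, g_p], h_p commutes with both φ and g_p, h_p has order exactly p, and h_p ≠ 1. Then G admits no faithful finite-dimensional complex linear representation; moreover, any homomorphism ρ : G → GL(k, ℂ) kills each g_p with p > k. -/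
/-!
Birkhoff's argument. Let `c = [a, b]` commute with `a` and `b` in `GL(V)`. Then `a` and `b`
preserve every eigenspace `E` of `c`, where `c` acts as a scalar `μ`; taking determinants on `E`
gives `μ ^ dim E = det [a|E, b|E] = 1`. If moreover `c ^ p = 1` for a prime `p > dim V`, then
`μ ^ p = 1` and `0 < dim E < p` force `μ = 1`; as `c` is diagonalizable (`X ^ p - 1` is
squarefree when `p ≠ 0` in the field), `c = 1`. So a representation of degree `k` kills
`h p = [φ, g p]` for `p > k`, and infinitely many such `p` rule out faithfulness.
-/

open Module Polynomial
open scoped commutatorElement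

namespace Module.End

variable {K V : Type*} [Field K] [AddCommGroup V] [Module K V]

noncomputable def eigenspaceDet (c : (End K V)ˣ) (μ : K) : Subgroup.centralizer {c} →* K where
  toFun u := LinearMap.det <| ((u : (End K V)ˣ) : End K V).restrict <|
    mapsTo_genEigenspace_of_comm
      (congrArg Units.val (Subgroup.mem_centralizer_singleton_iff.mp u.2)).symm μ 1
  map_one' := by
    rw [← LinearMap.det_id (M := (c : End K V).eigenspace μ)]
    rfl
  map_mul' u v := by
    rw [← map_mul]
    rfl

theorem pow_finrank_eigenspace_commutator_eq_one (a b : (End K V)ˣ)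
    (ha : Commute ⁅a, b⁆ a) (hb : Commute ⁅a, b⁆ b) (μ : K) :
    μ ^ finrank K (((⁅a, b⁆ : (End K V)ˣ) : End K V).eigenspace μ) = 1 := by
  set c := ⁅a, b⁆
  have mem : ∀ u, Commute c u → u ∈ Subgroup.centralizer {c} := fun u hu =>
    Subgroup.mem_centralizer_singleton_iff.mpr hu.eq.symm
  let a' : Subgroup.centralizer {c} := ⟨a, mem a ha⟩
  let b' : Subgroup.centralizer {c} := ⟨b, mem b hb⟩
  calc μ ^ finrank K ((c : End K V).eigenspace μ)
      = eigenspaceDet c μ ⟨c, mem c (.refl c)⟩ := by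
        simp only [eigenspaceDet, MonoidHom.coe_mk, OneHom.coe_mk, restrict_eigenspace,
          LinearMap.det_smul, LinearMap.det_id, mul_one]
    _ = (eigenspaceDet c μ).toHomUnits ⁅a', b'⁆ := rfl
    _ = 1 := by
        rw [map_commutatorElement, commutatorElement_eq_one_iff_commute.mpr (Commute.all _ _),
          Units.val_one]

theorem HasEigenvalue.pow_eq_one {f : End K V} {μ : K} (hμ : f.HasEigenvalue μ) {n : ℕ}
    (hf : f ^ n = 1) : μ ^ n = 1 := by
  obtain ⟨v, hv⟩ := hμ.exists_hasEigenvector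
  exact smul_left_injective K hv.2 (by simpa [hf] using (hv.pow_apply n).symm)

theorem eq_one_of_pow_eq_one_of_forall_hasEigenvalue [IsAlgClosed K] [FiniteDimensional K V]
    {f : End K V} {n : ℕ} (hn : (n : K) ≠ 0) (hf : f ^ n = 1)
    (heig : ∀ μ, f.HasEigenvalue μ → μ = 1) : f = 1 := by
  have hss : f.IsSemisimple := isSemisimple_of_squarefree_aeval_eq_zero
    (X_pow_sub_one_separable_iff.mpr hn).squarefree (by simp [hf])
  have htop : f.eigenspace 1 = ⊤ := by
    refine eq_top_iff.mpr (hss.iSup_eigenspace_eq_top.ge.trans (iSup_le fun μ => ?_))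
    by_cases hμ : f.HasEigenvalue μ
    · rw [heig μ hμ]
    · rw [hasEigenvalue_iff, not_not] at hμ
      simp [hμ]
  ext v
  simpa using mem_eigenspace_iff.mp (htop ▸ Submodule.mem_top : v ∈ f.eigenspace 1)

theorem commutator_eq_one_of_pow_eq_one [IsAlgClosed K] [FiniteDimensional K V] {p : ℕ}
    (hp : p.Prime) (hpK : (p : K) ≠ 0) (hdim : finrank K V < p) (a b : (End K V)ˣ)
    (ha : Commute ⁅a, b⁆ a) (hb : Commute ⁅a, b⁆ b) (hpow : ⁅a, b⁆ ^ p = 1) : ⁅a, b⁆ = 1 := by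
  have hpow' : ((⁅a, b⁆ : (End K V)ˣ) : End K V) ^ p = 1 := by
    rw [← Units.val_pow_eq_pow_val, hpow, Units.val_one]
  refine Units.ext <| eq_one_of_pow_eq_one_of_forall_hasEigenvalue hpK hpow' fun μ hμ => ?_
  set d := finrank K (((⁅a, b⁆ : (End K V)ˣ) : End K V).eigenspace μ)
  have hd : d ≠ 0 := fun h => hμ (Submodule.finrank_eq_zero.mp h)
  have hcop : p.Coprime d :=
    Nat.coprime_of_lt_prime hd ((Submodule.finrank_le _).trans_lt hdim) hp
  have hgcd := pow_gcd_eq_one.mpr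
    ⟨hμ.pow_eq_one hpow', pow_finrank_eigenspace_commutator_eq_one a b ha hb μ⟩
  rwa [hcop.gcd_eq_one, pow_one] at hgcd

end Module.End

theorem Matrix.GeneralLinearGroup.commutator_eq_one_of_pow_eq_one {n K : Type*} [Fintype n]
    [DecidableEq n] [Field K] [IsAlgClosed K] {p : ℕ} (hp : p.Prime) (hpK : (p : K) ≠ 0)
    (hn : Fintype.card n < p) (a b : GL n K) (ha : Commute ⁅a, b⁆ a) (hb : Commute ⁅a, b⁆ b)
    (hpow : ⁅a, b⁆ ^ p = 1) : ⁅a, b⁆ = 1 := by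
  apply toLin.injective
  rw [map_one, map_commutatorElement]
  refine Module.End.commutator_eq_one_of_pow_eq_one hp hpK (by simpa using hn) _ _ ?_ ?_ ?_
  all_goals rw [← map_commutatorElement]
  · exact ha.map toLin
  · exact hb.map toLin
  · rw [← map_pow, hpow, map_one]

/-- If a group `G` contains, for infinitely many primes `p`, elements `φ`, `g p`
with `h p = [φ, g p]` central in `⟨φ, g p⟩`, of order exactly `p` and nontrivial,
then `G` has no faithful finite-dimensional complex linear representation; moreover
any homomorphism `ρ : G → GL(k, ℂ)` kills `h p` for every such prime `p > k`. -/
theorem stmt15 {G : Type*} [Group G] (P : Set ℕ)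
    (hPprime : ∀ p ∈ P, p.Prime) (hPinf : P.Infinite)
    (φ : G) (g h : ℕ → G)
    (hcomm : ∀ p ∈ P, h p = φ * g p * φ⁻¹ * (g p)⁻¹)
    (hcentral : ∀ p ∈ P, Commute (h p) φ ∧ Commute (h p) (g p))
    (hord : ∀ p ∈ P, orderOf (h p) = p)
    (hne : ∀ p ∈ P, h p ≠ 1) :
    (∀ k : ℕ, ∀ ρ : G →* GL (Fin k) ℂ, ¬ Function.Injective ρ) ∧
    (∀ k : ℕ, ∀ ρ : G →* GL (Fin k) ℂ, ∀ p ∈ P, k < p → ρ (h p) = 1) := by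
  have kill (k : ℕ) (ρ : G →* GL (Fin k) ℂ) (p : ℕ) (hp : p ∈ P) (hkp : k < p) : ρ (h p) = 1 := by
    have hh : h p = ⁅φ, g p⁆ := hcomm p hp
    rw [hh, map_commutatorElement]
    refine Matrix.GeneralLinearGroup.commutator_eq_one_of_pow_eq_one (hPprime p hp)
      (Nat.cast_ne_zero.mpr (hPprime p hp).ne_zero) (by simpa using hkp) _ _ ?_ ?_ ?_
    all_goals rw [← map_commutatorElement, ← hh]
    · exact (hcentral p hp).1.map ρ
    · exact (hcentral p hp).2.map ρ
    · rw [← map_pow, orderOf_dvd_iff_pow_eq_one.mp (hord p hp).dvd, map_one]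
  refine ⟨fun k ρ hρ => ?_, kill⟩
  obtain ⟨p, hp, hkp⟩ := hPinf.exists_gt k
  exact hne p hp (hρ (by rw [map_one]; exact kill k ρ p hp hkp))
end
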